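/- arXiv:1205.3331 — 5 statements merged into one kernel-verified Lean document; each statement's English description precedes it below -/
import Mathlib

section
/- (Random codes, Gallager) Let n, m be positive natural numbers, let R = (n-m)/n, and let 0 < δ ≤ 1/2. If H is chosen uniformly at random from Matrix (Fin m) (Fin n) (ZMod 2), then the probability that the code {x ∈ (ZMod 2)^n : H·x = 0} contains a nonzero codeword of Hamming weight at most δ·n is at most 2^((R - (1 - h(δ)))·n). -/
open Finset


/-- The binary entropy function `h(x) = -x log₂ x - (1-x) log₂ (1-x)`. -/
noncomputable def binEnt (x : ℝ) : ℝ := -x * Real.logb 2 x - (1 - x) * Real.logb 2 (1 - x)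

lemma card_mat (m n : ℕ) : Nat.card (Matrix (Fin m) (Fin n) (ZMod 2)) = 2 ^ (m * n) := by
  rw [Nat.card_eq_fintype_card]
  show Fintype.card (Fin m → Fin n → ZMod 2) = _
  simp [← pow_mul, Nat.mul_comm]

lemma ker_count (m n : ℕ) (x : Fin n → ZMod 2) (hx : x ≠ 0) :
    Nat.card {H : Matrix (Fin m) (Fin n) (ZMod 2) // H.mulVec x = 0} * 2 ^ m
      = 2 ^ (m * n) := by
  let φ : Matrix (Fin m) (Fin n) (ZMod 2) →+ (Fin m → ZMod 2) :=
    { toFun := fun H => H.mulVec x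
      map_zero' := by simp
      map_add' := fun A B => Matrix.add_mulVec A B x }
  have hone : ∀ a : ZMod 2, a ≠ 0 → a = 1 := by decide
  have hsurj : Function.Surjective φ := by
    intro y
    obtain ⟨j, hj⟩ : ∃ j, x j ≠ 0 := by
      by_contra h; push_neg at h; exact hx (funext h)
    refine ⟨Matrix.of fun i k => if k = j then y i else 0, ?_⟩
    funext i
    simp [φ, Matrix.mulVec, dotProduct, hone _ hj]
  have hcard := AddSubgroup.card_eq_card_quotient_mul_card_addSubgroup φ.ker
  have hq : Nat.card (Matrix (Fin m) (Fin n) (ZMod 2) ⧸ φ.ker) = 2 ^ m := by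
    rw [Nat.card_congr (QuotientAddGroup.quotientKerEquivOfSurjective φ hsurj).toEquiv]
    simp [Nat.card_eq_fintype_card]
  have hk : Nat.card {H : Matrix (Fin m) (Fin n) (ZMod 2) // H.mulVec x = 0}
      = Nat.card φ.ker := by
    exact Nat.card_congr (Equiv.subtypeEquivRight fun H => by
      simp [AddMonoidHom.mem_ker, φ])
  rw [hk, mul_comm]
  rw [card_mat, hq] at hcard
  omega

lemma prod_eq (n : ℕ) (δ : ℝ) (x : Fin n → ZMod 2) :
    ∏ j, (if x j = 0 then 1 - δ else δ) = δ ^ (hammingNorm x) * (1 - δ) ^ (n - hammingNorm x) := by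
  classical
  rw [← Finset.prod_filter_mul_prod_filter_not univ (fun j => x j ≠ 0)]
  have h1 : ∏ j ∈ filter (fun j => x j ≠ 0) univ, (if x j = 0 then 1 - δ else δ)
      = δ ^ (hammingNorm x) := by
    have he : ∀ j ∈ filter (fun j => x j ≠ 0) univ,
        (if x j = 0 then 1 - δ else δ) = δ := fun j hj => by
      simp only [mem_filter] at hj; simp [hj.2]
    rw [Finset.prod_congr rfl he, Finset.prod_const]
    rfl
  have h2 : ∏ j ∈ filter (fun j => ¬ x j ≠ 0) univ, (if x j = 0 then 1 - δ else δ)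
      = (1 - δ) ^ (n - hammingNorm x) := by
    have he : ∀ j ∈ filter (fun j => ¬ x j ≠ 0) univ,
        (if x j = 0 then 1 - δ else δ) = 1 - δ := fun j hj => by
      simp only [mem_filter, not_not] at hj; simp [hj.2]
    rw [Finset.prod_congr rfl he, Finset.prod_const]
    congr 1
    have := Finset.card_filter_add_card_filter_not (s := (univ : Finset (Fin n)))
      (p := fun j => x j ≠ 0)
    have hnorm : hammingNorm x = (filter (fun j => x j ≠ 0) univ).card := rfl
    simp only [Finset.card_univ, Fintype.card_fin] at this
    omega
  rw [h1, h2]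

lemma sum_one (n : ℕ) (δ : ℝ) :
    ∑ x : Fin n → ZMod 2, δ ^ (hammingNorm x) * (1 - δ) ^ (n - hammingNorm x) = 1 := by
  classical
  have := Fintype.prod_sum (ι := Fin n) (κ := fun _ => ZMod 2)
    (f := fun _ b => if b = 0 then 1 - δ else (δ : ℝ))
  rw [Finset.sum_congr rfl (fun x _ => (prod_eq n δ x).symm), ← this]
  have hb : ∑ b : ZMod 2, (if b = 0 then 1 - δ else δ) = 1 := by
    have hu : (univ : Finset (ZMod 2)) = {0, 1} := by decide
    rw [hu, Finset.sum_insert (by decide), Finset.sum_singleton]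
    norm_num
  simp [hb]

lemma pointwise (δ : ℝ) (h0 : 0 < δ) (hle : δ ≤ 1/2) (k n : ℕ) (hkn : k ≤ n)
    (hk : (k : ℝ) ≤ δ * n) :
    (2:ℝ) ^ (-(binEnt δ * n)) ≤ δ ^ k * (1 - δ) ^ (n - k) := by
  have h1 : (0:ℝ) < 1 - δ := by linarith
  have hr0 : (0:ℝ) < δ / (1 - δ) := div_pos h0 h1
  have hr1 : δ / (1 - δ) ≤ 1 := by
    rw [div_le_one h1]; linarith
  have fact : ∀ a : ℝ, δ ^ a * (1 - δ) ^ ((n:ℝ) - a)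
      = (1 - δ) ^ (n:ℝ) * (δ / (1 - δ)) ^ a := by
    intro a
    rw [Real.div_rpow h0.le h1.le, Real.rpow_sub h1]
    have hne : (1 - δ) ^ a ≠ 0 := (Real.rpow_pos_of_pos h1 a).ne'
    field_simp
  have step1 : (2:ℝ) ^ (-(binEnt δ * n)) = δ ^ (δ * n) * (1 - δ) ^ ((n:ℝ) - δ * n) := by
    have he : -(binEnt δ * n) = Real.logb 2 δ * (δ * n) + Real.logb 2 (1 - δ) * ((n:ℝ) - δ * n) := by
      unfold binEnt; ring
    have f1 : (2:ℝ) ^ (Real.logb 2 δ * (δ * n)) = δ ^ (δ * n) := by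
      rw [Real.rpow_mul (by norm_num : (0:ℝ) ≤ 2),
        Real.rpow_logb (by norm_num) (by norm_num) h0]
    have f2 : (2:ℝ) ^ (Real.logb 2 (1 - δ) * ((n:ℝ) - δ * n)) = (1 - δ) ^ ((n:ℝ) - δ * n) := by
      rw [Real.rpow_mul (by norm_num : (0:ℝ) ≤ 2),
        Real.rpow_logb (by norm_num) (by norm_num) h1]
    rw [he, Real.rpow_add (by norm_num), f1, f2]
  have step2 : δ ^ ((k:ℝ)) * (1 - δ) ^ ((n:ℝ) - k) = δ ^ k * (1 - δ) ^ (n - k) := by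
    rw [Real.rpow_natCast, ← Nat.cast_sub hkn, Real.rpow_natCast]
  rw [step1, ← step2, fact, fact]
  apply mul_le_mul_of_nonneg_left _ (Real.rpow_pos_of_pos h1 _).le
  exact Real.rpow_le_rpow_of_exponent_ge hr0 hr1 hk


/-- (Random codes, Gallager) For a uniformly random parity-check matrix
`H ∈ Matrix (Fin m) (Fin n) (ZMod 2)`, the probability that the code
`{x : H·x = 0}` contains a nonzero codeword of Hamming weight at most `δ·n`
is at most `2^((R - (1 - h(δ)))·n)`, where `R = (n-m)/n` is the code rate. -/
theorem stmt_2 (n m : ℕ) (hn : 0 < n) (hm : 0 < m) (δ : ℝ) (hδ : 0 < δ) (hδ' : δ ≤ 1 / 2) :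
    (Nat.card {H : Matrix (Fin m) (Fin n) (ZMod 2) //
        ∃ x : Fin n → ZMod 2, x ≠ 0 ∧ H.mulVec x = 0 ∧ (hammingNorm x : ℝ) ≤ δ * n} : ℝ) /
      (Nat.card (Matrix (Fin m) (Fin n) (ZMod 2)) : ℝ) ≤
    2 ^ ((((n : ℝ) - m) / n - (1 - binEnt δ)) * n) := by
  classical
  set B : Finset (Fin n → ZMod 2) :=
    univ.filter (fun x => x ≠ 0 ∧ (hammingNorm x : ℝ) ≤ δ * n) with hB
  -- Step 1: union bound on the numerator (nat)
  have hmle : m ≤ m * n := Nat.le_mul_of_pos_right m hn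
  have hnum : Nat.card {H : Matrix (Fin m) (Fin n) (ZMod 2) //
        ∃ x : Fin n → ZMod 2, x ≠ 0 ∧ H.mulVec x = 0 ∧ (hammingNorm x : ℝ) ≤ δ * n}
      ≤ B.card * 2 ^ (m * n - m) := by
    rw [Nat.card_eq_fintype_card, Fintype.card_subtype]
    have hsub : (univ.filter (fun H : Matrix (Fin m) (Fin n) (ZMod 2) =>
          ∃ x : Fin n → ZMod 2, x ≠ 0 ∧ H.mulVec x = 0 ∧ (hammingNorm x : ℝ) ≤ δ * n))
        ⊆ B.biUnion (fun x => univ.filter (fun H => H.mulVec x = 0)) := by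
      intro H hH
      simp only [mem_filter, mem_univ, true_and] at hH
      obtain ⟨x, hx1, hx2, hx3⟩ := hH
      simp only [Finset.mem_biUnion, hB, mem_filter, mem_univ, true_and]
      exact ⟨x, ⟨hx1, hx3⟩, hx2⟩
    refine le_trans (Finset.card_le_card hsub) (le_trans (Finset.card_biUnion_le) (le_of_eq ?_))
    have hterm : ∀ x ∈ B, (univ.filter
        (fun H : Matrix (Fin m) (Fin n) (ZMod 2) => H.mulVec x = 0)).card
        = 2 ^ (m * n - m) := by
      intro x hx
      have hx0 : x ≠ 0 := by
        simp only [hB, mem_filter] at hx; exact hx.2.1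
      have h := ker_count m n x hx0
      rw [Nat.card_eq_fintype_card, Fintype.card_subtype] at h
      have h2 : 2 ^ (m * n - m) * 2 ^ m = 2 ^ (m * n) := by
        rw [← pow_add]; congr 1; omega
      exact Nat.eq_of_mul_eq_mul_right (show 0 < 2 ^ m by positivity) (by rw [h, ← h2])
    calc ∑ x ∈ B, (univ.filter
          (fun H : Matrix (Fin m) (Fin n) (ZMod 2) => H.mulVec x = 0)).card
        = ∑ _x ∈ B, 2 ^ (m * n - m) := Finset.sum_congr rfl hterm
      _ = B.card * 2 ^ (m * n - m) := by rw [Finset.sum_const, smul_eq_mul]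
  -- Step 2: entropy bound on B.card
  have hBcard : (B.card : ℝ) ≤ (2:ℝ) ^ (binEnt δ * n) := by
    have ht : (0:ℝ) < (2:ℝ) ^ (-(binEnt δ * n)) := Real.rpow_pos_of_pos (by norm_num) _
    have hsum : (B.card : ℝ) * (2:ℝ) ^ (-(binEnt δ * n)) ≤ 1 := by
      calc (B.card : ℝ) * (2:ℝ) ^ (-(binEnt δ * n))
          = ∑ _x ∈ B, (2:ℝ) ^ (-(binEnt δ * n)) := by rw [Finset.sum_const, nsmul_eq_mul]
        _ ≤ ∑ x ∈ B, δ ^ (hammingNorm x) * (1 - δ) ^ (n - hammingNorm x) := by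
            refine Finset.sum_le_sum fun x hx => ?_
            simp only [hB, mem_filter, mem_univ, true_and] at hx
            exact pointwise δ hδ hδ' _ n
              (le_trans (Finset.card_filter_le _ _) (by simp)) hx.2
        _ ≤ ∑ x : Fin n → ZMod 2, δ ^ (hammingNorm x) * (1 - δ) ^ (n - hammingNorm x) := by
            refine Finset.sum_le_sum_of_subset_of_nonneg (Finset.subset_univ _) fun x _ _ => ?_
            exact mul_nonneg (pow_nonneg hδ.le _) (pow_nonneg (by linarith) _)
        _ = 1 := sum_one n δ
    have h2 : (B.card : ℝ) ≤ ((2:ℝ) ^ (-(binEnt δ * n)))⁻¹ := by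
      rw [inv_eq_one_div, le_div_iff₀ ht]; exact hsum
    rwa [← Real.rpow_neg (by norm_num : (0:ℝ) ≤ 2), neg_neg] at h2
  -- Step 3: conclude
  have hexp : ((((n : ℝ) - m) / n - (1 - binEnt δ)) * n) = binEnt δ * n - m := by
    have hn0 : (n:ℝ) ≠ 0 := Nat.cast_ne_zero.mpr hn.ne'
    field_simp
    ring
  rw [hexp, card_mat]
  have key : (2:ℝ) ^ (binEnt δ * (n:ℝ) - (m:ℝ)) = (2:ℝ) ^ (binEnt δ * (n:ℝ)) / 2 ^ m := by
    rw [Real.rpow_sub (by norm_num), Real.rpow_natCast]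
  calc (Nat.card {H : Matrix (Fin m) (Fin n) (ZMod 2) //
        ∃ x : Fin n → ZMod 2, x ≠ 0 ∧ H.mulVec x = 0 ∧ (hammingNorm x : ℝ) ≤ δ * n} : ℝ)
        / ((2 ^ (m * n) : ℕ) : ℝ)
      ≤ ((B.card * 2 ^ (m * n - m) : ℕ) : ℝ) / ((2 ^ (m * n) : ℕ) : ℝ) := by
        have := hnum
        gcongr <;> exact_mod_cast hnum
    _ = (B.card : ℝ) / 2 ^ m := by
        push_cast
        rw [show ((2:ℝ) ^ (m * n)) = 2 ^ (m * n - m) * 2 ^ m by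
          rw [← pow_add]; congr 1; omega]
        field_simp
    _ ≤ (2:ℝ) ^ (binEnt δ * (n:ℝ)) / 2 ^ m := by gcongr
    _ = 2 ^ (binEnt δ * (n:ℝ) - (m:ℝ)) := key.symm
end

section
/- Let n, m be positive natural numbers and let 0 < δ ≤ 1/2. If m/n > h(δ), then there exists a parity-check matrix H ∈ Matrix (Fin m) (Fin n) (ZMod 2) such that every nonzero x ∈ (ZMod 2)^n with H·x = 0 has Hamming weight strictly greater than δ·n; that is, there exists a binary linear code of length n, dimension at least n - m, and minimum distance greater than δ·n. -/
/-!
Choose the parity-check matrix uniformly at random. For a fixed nonzero `x` the map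
`H ↦ H x` is a surjective linear map onto `(ZMod 2)^m`, so exactly a `2^(-m)` fraction of all
matrices kill `x`. The Hamming ball of radius `δ n` has at most `2^(n h(δ))` points: the weights
`δ^|s| (1-δ)^(n-|s|)` of the subsets `s` of the coordinates sum to `1`, and on supports of size
`|s| ≤ δ n` each weight is at least `2^(-n h(δ))` because `δ ≤ 1 - δ`. Since `n h(δ) < m`, the
union bound over the nonzero points of the ball leaves a matrix that kills none of them.
-/

open Finset Matrix

theorem two_rpow_neg_mul_binEnt_le {δ : ℝ} (hδ : 0 < δ) (hδ' : δ ≤ 1 / 2) {n k : ℕ}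
    (hk : (k : ℝ) ≤ δ * n) :
    (2 : ℝ) ^ (-(n * binEnt δ)) ≤ δ ^ k * (1 - δ) ^ (n - k) := by
  have hkn : k ≤ n := by
    exact_mod_cast (show (k : ℝ) ≤ n by nlinarith [(n.cast_nonneg : (0 : ℝ) ≤ n)])
  have h1δ : 0 < 1 - δ := by linarith
  rw [← Real.le_logb_iff_rpow_le (by norm_num) (by positivity),
    Real.logb_mul (by positivity) (by positivity), Real.logb_pow, Real.logb_pow,
    Nat.cast_sub hkn]
  have hlog : Real.logb 2 δ ≤ Real.logb 2 (1 - δ) :=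
    Real.logb_le_logb_of_le (by norm_num) hδ (by linarith)
  have hgap : 0 ≤ (δ * n - k) * (Real.logb 2 (1 - δ) - Real.logb 2 δ) :=
    mul_nonneg (by linarith) (by linarith)
  unfold binEnt
  linarith

theorem card_le_two_rpow_mul_binEnt {ι : Type*} [Fintype ι] {δ : ℝ} (hδ : 0 < δ)
    (hδ' : δ ≤ 1 / 2) (𝒜 : Finset (Finset ι))
    (h𝒜 : ∀ s ∈ 𝒜, (#s : ℝ) ≤ δ * Fintype.card ι) :
    (#𝒜 : ℝ) ≤ 2 ^ (Fintype.card ι * binEnt δ) := by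
  have hsum : #𝒜 * (2 : ℝ) ^ (-(Fintype.card ι * binEnt δ)) ≤ 1 :=
    calc #𝒜 * (2 : ℝ) ^ (-(Fintype.card ι * binEnt δ))
        = ∑ s ∈ 𝒜, (2 : ℝ) ^ (-(Fintype.card ι * binEnt δ)) := by
          rw [sum_const, nsmul_eq_mul]
      _ ≤ ∑ s ∈ 𝒜, δ ^ #s * (1 - δ) ^ (Fintype.card ι - #s) :=
          sum_le_sum fun s hs ↦ two_rpow_neg_mul_binEnt_le hδ hδ' (h𝒜 s hs)
      _ ≤ ∑ s : Finset ι, δ ^ #s * (1 - δ) ^ (Fintype.card ι - #s) :=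
          sum_le_univ_sum_of_nonneg fun s ↦ by
            have : δ < 1 := by linarith
            positivity
      _ = 1 := by rw [Fintype.sum_pow_mul_eq_add_pow, add_sub_cancel, one_pow]
  rwa [Real.rpow_neg (by norm_num), ← div_eq_mul_inv,
    div_le_one (by positivity)] at hsum

theorem card_filter_hammingNorm_le_two_rpow_mul_binEnt {ι : Type*} [Fintype ι] [DecidableEq ι]
    {δ : ℝ} (hδ : 0 < δ) (hδ' : δ ≤ 1 / 2) :
    (#{x : ι → ZMod 2 | (hammingNorm x : ℝ) ≤ δ * Fintype.card ι} : ℝ)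
      ≤ 2 ^ (Fintype.card ι * binEnt δ) := by
  have hbinary : ∀ a b : ZMod 2, (a ≠ 0 ↔ b ≠ 0) → a = b := by decide
  have hsupp : Function.Injective fun x : ι → ZMod 2 ↦ ({i | x i ≠ 0} : Finset ι) :=
    fun x y hxy ↦ funext fun i ↦ hbinary _ _ (by simpa using congrArg (i ∈ ·) hxy)
  rw [← card_image_of_injective _ hsupp]
  refine card_le_two_rpow_mul_binEnt hδ hδ' _ ?_
  simp only [mem_image, mem_filter, mem_univ, true_and]
  rintro _ ⟨x, hx, rfl⟩
  exact hx

theorem card_filter_mulVec_eq_zero_mul {F ι κ : Type*} [DivisionRing F] [Fintype F]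
    [DecidableEq F] [Fintype ι] [DecidableEq ι] [Fintype κ] [DecidableEq κ] {x : ι → F}
    (hx : x ≠ 0) :
    #{H : Matrix κ ι F | H *ᵥ x = 0} * Fintype.card F ^ Fintype.card κ
      = Fintype.card (Matrix κ ι F) := by
  obtain ⟨j, hj⟩ := Function.ne_iff.mp hx
  let f := mulVec.addMonoidHomLeft (m := κ) x
  have hf : Function.Surjective f := by
    intro y
    refine ⟨vecMulVec y (Pi.single j (x j)⁻¹), ?_⟩
    change vecMulVec y _ *ᵥ x = y
    rw [vecMulVec_mulVec, single_dotProduct, inv_mul_cancel₀ hj, MulOpposite.op_one, one_smul]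
  have := f.ker.card_mul_index
  rw [AddSubgroup.index_ker, AddMonoidHom.range_eq_top.mpr hf, AddSubgroup.card_top] at this
  simp only [Nat.card_eq_fintype_card, Fintype.card_subtype] at this
  convert this using 2
  · congr 1
    ext H
    simp only [mem_filter, mem_univ, true_and, AddMonoidHom.mem_ker]
    rfl
  exact Fintype.card_fun.symm

theorem exists_mulVec_ne_zero_of_card_lt {F ι κ : Type*} [DivisionRing F] [Fintype F]
    [Fintype ι] [Fintype κ] (S : Finset (ι → F)) (hS₀ : 0 ∉ S)
    (hS : #S < Fintype.card F ^ Fintype.card κ) :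
    ∃ H : Matrix κ ι F, ∀ x ∈ S, H *ᵥ x ≠ 0 := by
  classical
  by_contra! h
  set N := Fintype.card (Matrix κ ι F)
  set M := Fintype.card F ^ Fintype.card κ
  have hcover : (univ : Finset (Matrix κ ι F)) ⊆ S.biUnion fun x ↦ {H | H *ᵥ x = 0} :=
    fun H _ ↦ by simpa using h H
  have hcount : N * M ≤ #S * N :=
    calc N * M = #(univ : Finset (Matrix κ ι F)) * M := by rw [card_univ]
      _ ≤ (∑ x ∈ S, #{H : Matrix κ ι F | H *ᵥ x = 0}) * M := by
          gcongr
          exact (card_le_card hcover).trans card_biUnion_le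
      _ = #S * N := by
          rw [sum_mul, card_eq_sum_ones, sum_mul]
          exact sum_congr rfl fun x hx ↦ by
            rw [one_mul, card_filter_mulVec_eq_zero_mul (ne_of_mem_of_not_mem hx hS₀)]
  have hN : 0 < N := Fintype.card_pos
  rw [mul_comm] at hcount
  exact (Nat.mul_lt_mul_of_pos_right hS hN).not_ge hcount

theorem stmt_3_general (n m : ℕ) (hn : 0 < n) (δ : ℝ) (hδ : 0 < δ) (hδ' : δ ≤ 1 / 2)
    (hrate : (m : ℝ) / n > binEnt δ) :
    ∃ H : Matrix (Fin m) (Fin n) (ZMod 2),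
      ∀ x : Fin n → ZMod 2, x ≠ 0 → H.mulVec x = 0 → (hammingNorm x : ℝ) > δ * n := by
  set B : Finset (Fin n → ZMod 2) := {x | (hammingNorm x : ℝ) ≤ δ * n}
  have hB : #B < 2 ^ m := by
    have hball : (#B : ℝ) ≤ 2 ^ (n * binEnt δ) := by
      simpa using card_filter_hammingNorm_le_two_rpow_mul_binEnt (ι := Fin n) hδ hδ'
    have hexp : n * binEnt δ < m := by
      rw [gt_iff_lt, lt_div_iff₀ (by positivity)] at hrate
      linarith
    have hpow : (2 : ℝ) ^ (n * binEnt δ) < 2 ^ m := by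
      rw [← Real.rpow_natCast]
      exact Real.rpow_lt_rpow_of_exponent_lt one_lt_two hexp
    exact_mod_cast hball.trans_lt hpow
  obtain ⟨H, hH⟩ := exists_mulVec_ne_zero_of_card_lt (κ := Fin m) (B.erase 0)
    (notMem_erase 0 B) (card_erase_le.trans_lt (by simpa using hB))
  refine ⟨H, fun x hx hHx ↦ ?_⟩
  by_contra! hwt
  exact hH x (mem_erase.mpr ⟨hx, by simpa [B] using hwt⟩) hHx

/-- (Gilbert–Varshamov style existence) If `m/n > h(δ)` with `0 < δ ≤ 1/2`, then there
exists a parity-check matrix `H ∈ Matrix (Fin m) (Fin n) (ZMod 2)` such that every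
nonzero `x` with `H·x = 0` has Hamming weight strictly greater than `δ·n`; i.e. there is
a binary linear code of length `n`, dimension at least `n - m`, and minimum distance
greater than `δ·n`. -/
theorem stmt_3 (n m : ℕ) (hn : 0 < n) (hm : 0 < m) (δ : ℝ) (hδ : 0 < δ) (hδ' : δ ≤ 1 / 2)
    (hrate : (m : ℝ) / n > binEnt δ) :
    ∃ H : Matrix (Fin m) (Fin n) (ZMod 2),
      ∀ x : Fin n → ZMod 2, x ≠ 0 → H.mulVec x = 0 → (hammingNorm x : ℝ) > δ * n :=
  stmt_3_general n m hn δ hδ hδ' hrate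
end

section
/- (Concatenated codes) Let F be a finite field of cardinality 2^(k₂) equipped with a ZMod 2-linear bijection φ : F → (ZMod 2)^(k₂). Let C_out ⊆ F^(n₁) be an F-linear code of dimension k₁ whose nonzero codewords all have Hamming weight at least d₁, and let E : (ZMod 2)^(k₂) → (ZMod 2)^(n₂) be an injective ZMod 2-linear map whose nonzero images all have Hamming weight at least d₂. Then the set of vectors in (ZMod 2)^(n₁·n₂) obtained from codewords (c₁,…,c_{n₁}) ∈ C_out by replacing each symbol cᵢ with E(φ(cᵢ)) is a ZMod 2-linear code of length n₁·n₂ and dimension k₁·k₂ whose nonzero codewords all have Hamming weight at least d₁·d₂. -/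
/-- (Concatenated codes) Given an `[n₁, k₁, d₁]` outer code over a field `F` of
cardinality `2^k₂`, a `ZMod 2`-linear identification `φ : F ≃ (ZMod 2)^k₂`, and an
injective `ZMod 2`-linear inner encoding `E : (ZMod 2)^k₂ → (ZMod 2)^n₂` whose nonzero
images have Hamming weight at least `d₂`, the concatenated code — obtained from outer
codewords by replacing each symbol `cᵢ` with `E(φ(cᵢ))` — is a `ZMod 2`-linear code of
length `n₁·n₂` and dimension `k₁·k₂` whose nonzero codewords all have Hamming weight at
least `d₁·d₂`. -/
theorem stmt_4 (n₁ k₁ d₁ n₂ k₂ d₂ : ℕ) (F : Type*) [Field F] [Fintype F] [DecidableEq F]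
    [Algebra (ZMod 2) F] (hcard : Fintype.card F = 2 ^ k₂)
    (φ : F ≃ₗ[ZMod 2] (Fin k₂ → ZMod 2))
    (Cout : Submodule F (Fin n₁ → F))
    (hdim : Module.finrank F Cout = k₁)
    (hd₁ : ∀ c ∈ Cout, c ≠ 0 → d₁ ≤ hammingNorm c)
    (E : (Fin k₂ → ZMod 2) →ₗ[ZMod 2] (Fin n₂ → ZMod 2))
    (hE : Function.Injective E)
    (hd₂ : ∀ v : Fin k₂ → ZMod 2, v ≠ 0 → d₂ ≤ hammingNorm (E v)) :
    ∃ Ccat : Submodule (ZMod 2) (Fin n₁ × Fin n₂ → ZMod 2),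
      (Ccat : Set (Fin n₁ × Fin n₂ → ZMod 2)) =
        {w | ∃ c ∈ Cout, ∀ i j, w (i, j) = E (φ (c i)) j} ∧
      Module.finrank (ZMod 2) Ccat = k₁ * k₂ ∧
      ∀ w ∈ Ccat, w ≠ 0 → d₁ * d₂ ≤ hammingNorm w := by
  classical
  set T : (Fin n₁ → F) →ₗ[ZMod 2] (Fin n₁ × Fin n₂ → ZMod 2) :=
    { toFun := fun c p => E (φ (c p.1)) p.2
      map_add' := by intro c c'; funext p; simp
      map_smul' := by intro r c; funext p; simp } with hT
  have hTinj : Function.Injective T := by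
    intro c c' h
    funext i
    apply φ.injective
    apply hE
    funext j
    exact congrFun h (i, j)
  refine ⟨(Cout.restrictScalars (ZMod 2)).map T, ?_, ?_, ?_⟩
  · ext w
    simp only [Submodule.map_coe, Set.mem_image, Set.mem_setOf_eq,
      Submodule.restrictScalars_mem, SetLike.mem_coe]
    constructor
    · rintro ⟨c, hc, rfl⟩
      exact ⟨c, hc, fun i j => rfl⟩
    · rintro ⟨c, hc, hw⟩
      exact ⟨c, hc, by funext p; exact (hw p.1 p.2).symm⟩
  · have e1 := LinearEquiv.finrank_eq
      (Submodule.equivMapOfInjective T hTinj (Cout.restrictScalars (ZMod 2)))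
    rw [← e1]
    have hF : Module.finrank (ZMod 2) F = k₂ := by
      rw [φ.finrank_eq, Module.finrank_fin_fun]
    have := Module.finrank_mul_finrank (ZMod 2) F Cout
    have hre : Module.finrank (ZMod 2) (Cout.restrictScalars (ZMod 2)) =
        Module.finrank (ZMod 2) Cout := rfl
    rw [hre, ← this, hF, hdim, Nat.mul_comm]
  · rintro w hw hw0
    obtain ⟨c, hc, rfl⟩ := hw
    have hc0 : c ≠ 0 := by rintro rfl; exact hw0 (map_zero T)
    have hnorm : hammingNorm (T c) =
        ∑ i : Fin n₁, hammingNorm (E (φ (c i))) := by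
      simp only [hammingNorm, Finset.card_filter]
      rw [Fintype.sum_prod_type]
      rfl
    rw [hnorm]
    have key : ∀ i ∈ Finset.univ.filter (fun i : Fin n₁ => c i ≠ 0),
        d₂ ≤ hammingNorm (E (φ (c i))) := by
      intro i hi
      simp only [Finset.mem_filter] at hi
      exact hd₂ _ (by simpa using hi.2)
    calc d₁ * d₂ ≤ hammingNorm c * d₂ := Nat.mul_le_mul_right _ (hd₁ c hc hc0)
      _ ≤ ∑ i ∈ Finset.univ.filter (fun i : Fin n₁ => c i ≠ 0),
            hammingNorm (E (φ (c i))) := by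
          simpa [hammingNorm, smul_eq_mul, mul_comm] using
            Finset.card_nsmul_le_sum _ (fun i => hammingNorm (E (φ (c i)))) d₂ key
      _ ≤ ∑ i : Fin n₁, hammingNorm (E (φ (c i))) :=
          Finset.sum_le_sum_of_subset (Finset.filter_subset _ _)
end

section
/- Let 0 < ε < 1, 0 < β < 1/2, and let n be a positive natural number with ln(2/ε) ≤ β²·n. Set α₁ = √(ln(1/ε)/(2n)) and m = (1/2 - α₁)·n, and assume m > 0. Then α₂ := √(ln(2/ε)/(2m)) satisfies α₂ ≤ β/√(1 - 2β). -/
/-- If `0 < ε < 1`, `0 < β < 1/2` and `n ≥ 1` with `ln(2/ε) ≤ β²·n`, then with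
`α₁ = √(ln(1/ε)/(2n))` and `m = (1/2 - α₁)·n > 0`, the Hoeffding deviation parameter
`α₂ = √(ln(2/ε)/(2m))` satisfies `α₂ ≤ β/√(1 - 2β)`. -/
theorem stmt_11 (ε β : ℝ) (n : ℕ) (hε : 0 < ε) (hε' : ε < 1) (hβ : 0 < β) (hβ' : β < 1 / 2)
    (hn : 0 < n) (h : Real.log (2 / ε) ≤ β ^ 2 * n)
    (α₁ m : ℝ) (hα₁ : α₁ = Real.sqrt (Real.log (1 / ε) / (2 * n)))
    (hm : m = (1 / 2 - α₁) * n) (hmpos : 0 < m) :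
    Real.sqrt (Real.log (2 / ε) / (2 * m)) ≤ β / Real.sqrt (1 - 2 * β) := by
  have hnpos : (0:ℝ) < n := by exact_mod_cast hn
  have hL12 : Real.log (1 / ε) ≤ Real.log (2 / ε) := by
    apply Real.log_le_log (by positivity)
    apply div_le_div_of_nonneg_right (by norm_num) hε.le
  have hα₁β : α₁ ≤ β := by
    rw [hα₁]
    have h1 : Real.log (1 / ε) / (2 * n) ≤ β ^ 2 := by
      rw [div_le_iff₀ (by positivity)]
      nlinarith
    calc Real.sqrt (Real.log (1 / ε) / (2 * n)) ≤ Real.sqrt (β ^ 2) :=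
          Real.sqrt_le_sqrt h1
      _ = β := Real.sqrt_sq hβ.le
  have h2β : (0:ℝ) < 1 - 2 * β := by linarith
  have hrhs : β / Real.sqrt (1 - 2 * β) = Real.sqrt (β ^ 2 / (1 - 2 * β)) := by
    rw [Real.sqrt_div' (β ^ 2) h2β.le, Real.sqrt_sq hβ.le]
  rw [hrhs]
  apply Real.sqrt_le_sqrt
  rw [div_le_div_iff₀ (by positivity) h2β]
  nlinarith [mul_le_mul_of_nonneg_left hα₁β (by positivity : (0:ℝ) ≤ 2 * β ^ 2 * n),
    mul_le_mul_of_nonneg_right h h2β.le]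
end

section
/- Let r_s > 0, r_bA ≥ 0, τ_c ≥ 0, η_A > 0, 0 < η_B ≤ 1, r_B > 0, with r_A = η_A·(r_s + r_bA), r_p = η_A·η_B·r_s, η_A ≥ r_p/r_B, and η_B ≥ r_p/r_A. Define p⁰_sent = r_bA/(r_bA + r_s) and p^{n>1}_sent = (r_p/(η_B·r_A))·(1 - e^{-r_s·τ_c}). Then p¹_sent := 1 - p⁰_sent - p^{n>1}_sent satisfies p¹_sent ≥ r_p/r_A - (r_A·r_B/r_p)·τ_c. -/
/-- With `r_A = η_A·(r_s + r_bA)`, `r_p = η_A·η_B·r_s`, `η_A ≥ r_p/r_B`, `η_B ≥ r_p/r_A`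
and `η_B ≤ 1`, the single-photon probability
`p¹_sent = 1 - p⁰_sent - p^{n>1}_sent`, where `p⁰_sent = r_bA/(r_bA + r_s)` and
`p^{n>1}_sent = (r_p/(η_B·r_A))·(1 - e^{-r_s·τ_c})`, satisfies
`p¹_sent ≥ r_p/r_A - (r_A·r_B/r_p)·τ_c`. -/
theorem stmt_18 (r_s r_bA τ_c η_A η_B r_B : ℝ) (hrs : 0 < r_s) (hrbA : 0 ≤ r_bA)
    (hτ : 0 ≤ τ_c) (hηA : 0 < η_A) (hηB : 0 < η_B) (hηB' : η_B ≤ 1) (hrB : 0 < r_B)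
    (r_A r_p : ℝ) (hrA : r_A = η_A * (r_s + r_bA)) (hrp : r_p = η_A * η_B * r_s)
    (hηA' : r_p / r_B ≤ η_A) (hηB'' : r_p / r_A ≤ η_B)
    (p0 pMulti p1 : ℝ) (hp0 : p0 = r_bA / (r_bA + r_s))
    (hpMulti : pMulti = r_p / (η_B * r_A) * (1 - Real.exp (-(r_s * τ_c))))
    (hp1 : p1 = 1 - p0 - pMulti) :
    p1 ≥ r_p / r_A - r_A * r_B / r_p * τ_c := by
  have hsum : 0 < r_bA + r_s := by linarith
  have hrA0 : 0 < r_A := by rw [hrA]; positivity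
  have hrp0 : 0 < r_p := by rw [hrp]; positivity
  set c : ℝ := r_p / (η_B * r_A) with hc
  have hc0 : 0 < c := by rw [hc]; positivity
  have hp1' : p1 = c * Real.exp (-(r_s * τ_c)) := by
    rw [hp1, hp0, hpMulti, hc, hrp, hrA]
    field_simp
    ring
  have hexp : (1 : ℝ) - r_s * τ_c ≤ Real.exp (-(r_s * τ_c)) := by
    have := Real.add_one_le_exp (-(r_s * τ_c)); linarith
  have h1 : c * (1 - r_s * τ_c) ≤ p1 := by
    rw [hp1']; exact mul_le_mul_of_nonneg_left hexp hc0.le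
  -- c ≥ r_p / r_A
  have hcge : r_p / r_A ≤ c := by
    rw [hc]
    apply div_le_div_of_nonneg_left hrp0.le (by positivity)
    nlinarith
  -- c * r_s ≤ r_A * r_B / r_p
  have hrB' : η_B * r_s ≤ r_B := by
    have : r_p ≤ η_A * r_B := (div_le_iff₀ hrB).mp hηA'
    rw [hrp] at this; nlinarith
  have hrA' : η_A * r_s ≤ r_A := by rw [hrA]; nlinarith
  have hkey : c * r_s ≤ r_A * r_B / r_p := by
    rw [hc, div_mul_eq_mul_div, div_le_div_iff₀ (by positivity) hrp0]
    rw [hrp]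
    have hA2 : η_A * r_s * (η_A * r_s) ≤ r_A * r_A :=
      mul_le_mul hrA' hrA' (by positivity) hrA0.le
    have hB2 : η_B * (η_B * r_s) ≤ η_B * r_B :=
      mul_le_mul_of_nonneg_left hrB' hηB.le
    have := mul_le_mul hA2 hB2 (by positivity) (by positivity)
    nlinarith [this]
  have : c - r_A * r_B / r_p * τ_c ≤ c * (1 - r_s * τ_c) := by
    have := mul_le_mul_of_nonneg_right hkey hτ
    nlinarith
  linarith
end
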